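/- arXiv:1304.7012 — 3 statements merged into one kernel-verified Lean document; each statement's English description precedes it below -/
import Mathlib

section
/- Each irreducible component of the m-th jet scheme at the origin of the node x₁x₂ = 0 is the vanishing locus of X_{1,1} = … = X_{1,r₁} = X_{2,1} = … = X_{2,r₂} = 0 for some r₁, r₂ ≥ 0 with r₁ + r₂ = m − 1, viewed inside Spec k[X̲₁,…,X̲_m]. -/
/-!
Write `F_n` for the `n`-th jet equation `∑_{i+j+2=n} X_{0,i} X_{1,j}` of `x₀x₁` (variables
indexed from `0`). Given a prime `p` containing all `F_n`, `n ≤ m`, let `r_j` be the length of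
the longest run `X_{j,0}, X_{j,1}, …` of variables lying in `p`. If `r₀ + r₁ + 2 ≤ m`, then
modulo these variables `F_{r₀+r₁+2} ≡ X_{0,r₀} X_{1,r₁}`, so one of the two lies in `p`,
contradicting maximality of the runs. Hence `p` contains the prime ideal generated by the
variables `X_{j,i}` with `i < s_j`, for some `s₀ + s₁ = m - 1`; that ideal already contains
every `F_n` with `n ≤ m`, since each monomial `X_{0,i} X_{1,j}` of such an `F_n` has `i < s₀`
or `j < s₁`. Minimality of `p` forces equality.
-/

open MvPolynomial

noncomputable def jetPoly (k : Type*) [CommRing k] (N m : ℕ)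
    (f : MvPolynomial (Fin N) k) (n : ℕ) : MvPolynomial (Fin N × Fin m) k :=
  (Polynomial.coeff
    (MvPolynomial.aeval
      (fun j : Fin N =>
        ∑ i : Fin m,
          Polynomial.C (MvPolynomial.X (R := k) (j, i)) * Polynomial.X ^ ((i : ℕ) + 1)) f) n)

noncomputable def jetIdeal (k : Type*) [CommRing k] (N : ℕ)
    (I : Ideal (MvPolynomial (Fin N) k)) (m : ℕ) :
    Ideal (MvPolynomial (Fin N × Fin m) k) :=
  Ideal.span {g | ∃ f ∈ I, ∃ n, 1 ≤ n ∧ n ≤ m ∧ g = jetPoly k N m f n}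

namespace MvPolynomial

/-- The ideal is the kernel of the substitution killing the variables in `s`, whose target is
a domain. -/
theorem isPrime_span_X_image {σ R : Type*} [CommRing R] [IsDomain R] (s : Set σ) :
    (Ideal.span (X '' s : Set (MvPolynomial σ R))).IsPrime := by
  classical
  set J := Ideal.span (X '' s : Set (MvPolynomial σ R))
  let φ : MvPolynomial σ R →ₐ[R] MvPolynomial σ R :=
    aeval fun i => if i ∈ s then 0 else X i
  have hφ : (Ideal.Quotient.mkₐ R J).comp φ = Ideal.Quotient.mkₐ R J := by
    refine algHom_ext fun i => ?_
    by_cases hi : i ∈ s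
    · simpa [φ, hi] using
        (Ideal.Quotient.eq_zero_iff_mem.2 (Ideal.subset_span (Set.mem_image_of_mem X hi))).symm
    · simp [φ, hi]
  suffices J = RingHom.ker φ from this ▸ RingHom.ker_isPrime _
  refine le_antisymm ?_ fun f hf => ?_
  · rw [Ideal.span_le]
    rintro _ ⟨i, hi, rfl⟩
    simp [φ, hi]
  · rw [← Ideal.Quotient.eq_zero_iff_mem, ← Ideal.Quotient.mkₐ_eq_mk R, ← hφ,
      AlgHom.comp_apply, (RingHom.mem_ker).1 hf, map_zero]

end MvPolynomial

theorem Fin.exists_forall_lt_and_not {m : ℕ} (P : Fin m → Prop) :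
    ∃ r ≤ m, (∀ i : Fin m, (i : ℕ) < r → P i) ∧
      ∀ i : Fin m, (i : ℕ) = r → ¬ P i := by
  classical
  have hex : ∃ r, ∀ i : Fin m, (i : ℕ) = r → ¬ P i :=
    ⟨m, fun i hi => absurd hi i.isLt.ne⟩
  refine ⟨Nat.find hex, Nat.find_min' hex fun i hi => absurd hi i.isLt.ne, fun i hi => ?_,
    Nat.find_spec hex⟩
  by_contra hPi
  exact Nat.find_min hex hi fun i' hi' => Fin.ext hi' ▸ hPi

section Jets

variable {k : Type*} [CommRing k] {N m : ℕ}

open Finset in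
theorem jetPoly_mul (f g : MvPolynomial (Fin N) k) (n : ℕ) :
    jetPoly k N m (f * g) n =
      ∑ x ∈ antidiagonal n, jetPoly k N m f x.1 * jetPoly k N m g x.2 := by
  simp only [jetPoly, map_mul, Polynomial.coeff_mul]

theorem jetPoly_mem_jetIdeal {I : Ideal (MvPolynomial (Fin N) k)} {f : MvPolynomial (Fin N) k}
    (hf : f ∈ I) {n : ℕ} (h₁ : 1 ≤ n) (h₂ : n ≤ m) :
    jetPoly k N m f n ∈ jetIdeal k N I m :=
  Ideal.subset_span ⟨f, hf, n, h₁, h₂, rfl⟩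

theorem jetIdeal_span_singleton_le {f : MvPolynomial (Fin N) k}
    {J : Ideal (MvPolynomial (Fin N × Fin m) k)} (hJ : ∀ n ≤ m, jetPoly k N m f n ∈ J) :
    jetIdeal k N (Ideal.span {f}) m ≤ J := by
  rw [jetIdeal, Ideal.span_le]
  rintro _ ⟨_, hg, n, -, hn, rfl⟩
  obtain ⟨g, rfl⟩ := Ideal.mem_span_singleton'.1 hg
  rw [mul_comm, jetPoly_mul]
  refine Ideal.sum_mem _ fun x hx => Ideal.mul_mem_right _ _ (hJ _ ?_)
  exact (Finset.HasAntidiagonal.antidiagonal.fst_le hx).trans hn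

end Jets

section Node

variable {k : Type*} [CommRing k] {m : ℕ}

theorem jetPoly_X_zero_mul_X_one (n : ℕ) :
    jetPoly k 2 m (X 0 * X 1) n =
      ∑ x : Fin m × Fin m,
        if (x.1 : ℕ) + x.2 + 2 = n then X ((0 : Fin 2), x.1) * X ((1 : Fin 2), x.2) else 0 := by
  rw [jetPoly, map_mul, aeval_X, aeval_X, Finset.sum_mul_sum, ← Finset.sum_product',
    Polynomial.finsetSum_coeff]
  refine Finset.sum_congr rfl fun x _ => ?_
  rw [mul_mul_mul_comm, ← Polynomial.C_mul, ← pow_add, Polynomial.coeff_C_mul_X_pow]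
  exact if_congr (by omega) rfl rfl

theorem X_zero_mul_X_one_mem {J : Ideal (MvPolynomial (Fin 2 × Fin m) k)} {r : Fin 2 → ℕ}
    (hJ : ∀ x : Fin 2 × Fin m, (x.2 : ℕ) < r x.1 → X x ∈ J) {a b : Fin m}
    (h : (a : ℕ) < r 0 ∨ (b : ℕ) < r 1) : X ((0 : Fin 2), a) * X ((1 : Fin 2), b) ∈ J :=
  h.elim (fun ha => J.mul_mem_right _ (hJ (0, a) ha)) fun hb => J.mul_mem_left _ (hJ (1, b) hb)

theorem jetPoly_X_zero_mul_X_one_mem {J : Ideal (MvPolynomial (Fin 2 × Fin m) k)}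
    {r : Fin 2 → ℕ} (hJ : ∀ x : Fin 2 × Fin m, (x.2 : ℕ) < r x.1 → X x ∈ J) {n : ℕ}
    (hn : n < r 0 + r 1 + 2) : jetPoly k 2 m (X 0 * X 1) n ∈ J := by
  rw [jetPoly_X_zero_mul_X_one]
  refine Ideal.sum_mem _ fun x _ => ?_
  split_ifs with h
  · exact X_zero_mul_X_one_mem hJ (by omega)
  · exact J.zero_mem

theorem jetPoly_X_zero_mul_X_one_sub_mem {J : Ideal (MvPolynomial (Fin 2 × Fin m) k)}
    (i : Fin 2 → Fin m) (hJ : ∀ x : Fin 2 × Fin m, (x.2 : ℕ) < i x.1 → X x ∈ J) :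
    jetPoly k 2 m (X 0 * X 1) (i 0 + i 1 + 2) - X (0, i 0) * X (1, i 1) ∈ J := by
  rw [jetPoly_X_zero_mul_X_one, ← Finset.add_sum_erase _ _ (Finset.mem_univ (i 0, i 1)),
    if_pos rfl, add_sub_cancel_left]
  refine Ideal.sum_mem _ fun x hx => ?_
  split_ifs with h
  · have hne : x ≠ (i 0, i 1) := Finset.ne_of_mem_erase hx
    refine X_zero_mul_X_one_mem (r := fun j => i j) hJ ?_
    by_contra! hge
    exact hne (Prod.ext (Fin.ext (show (x.1 : ℕ) = i 0 by omega))
      (Fin.ext (show (x.2 : ℕ) = i 1 by omega)))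
  · exact J.zero_mem

theorem exists_X_mem_of_jetIdeal_le {p : Ideal (MvPolynomial (Fin 2 × Fin m) k)} [p.IsPrime]
    (hp : jetIdeal k 2 (Ideal.span {X 0 * X 1}) m ≤ p) (i : Fin 2 → Fin m)
    (hi : ∀ x : Fin 2 × Fin m, (x.2 : ℕ) < i x.1 → X x ∈ p)
    (hm : (i 0 : ℕ) + i 1 + 2 ≤ m) :
    ∃ j, X (j, i j) ∈ p := by
  have hF := hp (jetPoly_mem_jetIdeal (Ideal.mem_span_singleton_self _) (by omega) hm)
  have hprod := (Submodule.sub_mem_iff_right _ hF).1 (jetPoly_X_zero_mul_X_one_sub_mem i hi)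
  rcases Ideal.IsPrime.mem_or_mem ‹_› hprod with h | h
  exacts [⟨0, h⟩, ⟨1, h⟩]

variable (k m) in
noncomputable def nodeComponent (r : Fin 2 → ℕ) : Ideal (MvPolynomial (Fin 2 × Fin m) k) :=
  Ideal.span (X '' {x | (x.2 : ℕ) < r x.1})

theorem nodeComponent_le_iff {r : Fin 2 → ℕ} {J : Ideal (MvPolynomial (Fin 2 × Fin m) k)} :
    nodeComponent k m r ≤ J ↔ ∀ x : Fin 2 × Fin m, (x.2 : ℕ) < r x.1 → X x ∈ J := by
  rw [nodeComponent, Ideal.span_le, Set.image_subset_iff]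
  rfl

theorem nodeComponent_mono {r r' : Fin 2 → ℕ} (h : r ≤ r') :
    nodeComponent k m r ≤ nodeComponent k m r' :=
  Ideal.span_mono (Set.image_mono fun x hx => lt_of_lt_of_le hx (h x.1))

theorem nodeComponent_isPrime [IsDomain k] (r : Fin 2 → ℕ) :
    (nodeComponent k m r).IsPrime :=
  isPrime_span_X_image _

theorem jetIdeal_le_nodeComponent {r : Fin 2 → ℕ} (h : m ≤ r 0 + r 1 + 1) :
    jetIdeal k 2 (Ideal.span {X 0 * X 1}) m ≤ nodeComponent k m r :=
  jetIdeal_span_singleton_le fun _ hn =>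
    jetPoly_X_zero_mul_X_one_mem (nodeComponent_le_iff.1 le_rfl) (by omega)

theorem exists_nodeComponent_le {p : Ideal (MvPolynomial (Fin 2 × Fin m) k)} [p.IsPrime]
    (hp : jetIdeal k 2 (Ideal.span {X 0 * X 1}) m ≤ p) :
    ∃ r : Fin 2 → ℕ, r 0 + r 1 = m - 1 ∧ nodeComponent k m r ≤ p := by
  choose r hrm hlt hnot using fun j : Fin 2 => Fin.exists_forall_lt_and_not fun i => X (j, i) ∈ p
  have hsum : m ≤ r 0 + r 1 + 1 := by
    by_contra! h
    have hr : ∀ j, r j < m := Fin.forall_fin_two.2 ⟨by omega, by omega⟩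
    obtain ⟨j, hj⟩ := exists_X_mem_of_jetIdeal_le hp (fun j => ⟨r j, hr j⟩)
      (fun x hx => hlt x.1 x.2 hx) (by simp only; omega)
    exact hnot j _ rfl hj
  let s : Fin 2 → ℕ := ![min (r 0) (m - 1), m - 1 - min (r 0) (m - 1)]
  have hsr : s ≤ r :=
    Fin.forall_fin_two.2 ⟨min_le_left _ _, show m - 1 - min (r 0) (m - 1) ≤ r 1 by omega⟩
  exact ⟨s, show min (r 0) (m - 1) + (m - 1 - min (r 0) (m - 1)) = m - 1 by omega,
    (nodeComponent_mono hsr).trans (nodeComponent_le_iff.2 fun x hx => hlt x.1 x.2 hx)⟩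

theorem nodeComponent_eq_span_union (r : Fin 2 → ℕ) :
    nodeComponent k m r = Ideal.span
      (((fun i : Fin m => (X ((0 : Fin 2), i) : MvPolynomial (Fin 2 × Fin m) k)) ''
          {i : Fin m | (i : ℕ) < r 0}) ∪
       ((fun i : Fin m => (X ((1 : Fin 2), i) : MvPolynomial (Fin 2 × Fin m) k)) ''
          {i : Fin m | (i : ℕ) < r 1})) := by
  rw [nodeComponent]
  congr 1
  ext f
  simp [Prod.exists, Fin.exists_fin_two]

end Node

theorem node_jet_scheme_minimal_primes_general (k : Type*) [Field k]
    (m : ℕ)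
    (p : Ideal (MvPolynomial (Fin 2 × Fin m) k))
    (hp : p ∈ (jetIdeal k 2 (Ideal.span {(X 0 * X 1 : MvPolynomial (Fin 2) k)}) m).minimalPrimes) :
    ∃ r₁ r₂ : ℕ, r₁ + r₂ = m - 1 ∧
      p = Ideal.span
        (((fun i : Fin m => (X ((0 : Fin 2), i) : MvPolynomial (Fin 2 × Fin m) k)) ''
            {i : Fin m | (i : ℕ) < r₁}) ∪
         ((fun i : Fin m => (X ((1 : Fin 2), i) : MvPolynomial (Fin 2 × Fin m) k)) ''
            {i : Fin m | (i : ℕ) < r₂})) := by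
  obtain ⟨⟨hprime, hle⟩, hmin⟩ := hp
  obtain ⟨r, hr, hrp⟩ := exists_nodeComponent_le hle
  have hcomp : jetIdeal k 2 (Ideal.span {X 0 * X 1}) m ≤ nodeComponent k m r :=
    jetIdeal_le_nodeComponent (by omega)
  refine ⟨r 0, r 1, hr, ?_⟩
  rw [← nodeComponent_eq_span_union]
  exact le_antisymm (hmin ⟨nodeComponent_isPrime r, hcomp⟩ hrp) hrp

theorem node_jet_scheme_minimal_primes (k : Type*) [Field k] [IsAlgClosed k] [CharZero k]
    (m : ℕ) (hm : 1 ≤ m)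
    (p : Ideal (MvPolynomial (Fin 2 × Fin m) k))
    (hp : p ∈ (jetIdeal k 2 (Ideal.span {(X 0 * X 1 : MvPolynomial (Fin 2) k)}) m).minimalPrimes) :
    ∃ r₁ r₂ : ℕ, r₁ + r₂ = m - 1 ∧
      p = Ideal.span
        (((fun i : Fin m => (X ((0 : Fin 2), i) : MvPolynomial (Fin 2 × Fin m) k)) ''
            {i : Fin m | (i : ℕ) < r₁}) ∪
         ((fun i : Fin m => (X ((1 : Fin 2), i) : MvPolynomial (Fin 2 × Fin m) k)) ''
            {i : Fin m | (i : ℕ) < r₂})) :=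
  node_jet_scheme_minimal_primes_general k m p hp
end

section
/- Let X be a hypersurface in 𝔸^{d+1} of multiplicity 2 at the origin with τ-invariant τ(X,0) = 1, written as x₁² + g(x₂,…,x_{d+1}) = 0 with mult g ≥ 3. If (X,0) is a top singularity, then mult g = 3 (i.e. m₂(X,0) = 3). -/
/-!
STATEMENT 5: Let `X ⊆ 𝔸^{d+1}` be a hypersurface germ of multiplicity `2` at the origin
with `τ(X,0) = 1`, written (in the completed local ring) as `x₁² + g(x₂,…,x_{d+1}) = 0`
with `mult g ≥ 3`.  If `(X,0)` is a top singularity (`dim Xₘ⁰ = md+1` for all `m ≥ 1`),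
then `mult g = 3`, i.e. `m₂(X,0) = 3` (formalized: `g ∉ 𝔪⁴`).
-/

open MvPolynomial

/-- The jet equation `Fₙ⁰` of a formal power series: since each variable is substituted by a
series of `t`-order `≥ 1`, the coefficient of `tⁿ` only depends on the truncation of `f`. -/
noncomputable def psJet (k : Type*) [CommRing k] (N m : ℕ)
    (f : MvPowerSeries (Fin N) k) (n : ℕ) : MvPolynomial (Fin N × Fin m) k :=
  jetPoly k N m
    (MvPowerSeries.trunc k (Finsupp.equivFunOnFinite.symm fun _ : Fin N => n + 1) f) n

/-- The ideal of the `m`-th jet scheme centered at the closed point of `Spec k[[x]]/I`. -/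
noncomputable def psJetIdeal (k : Type*) [CommRing k] (N : ℕ)
    (I : Ideal (MvPowerSeries (Fin N) k)) (m : ℕ) :
    Ideal (MvPolynomial (Fin N × Fin m) k) :=
  Ideal.span {g | ∃ f ∈ I, ∃ n, 1 ≤ n ∧ n ≤ m ∧ g = psJet k N m f n}

/-- The maximal ideal of the formal power series ring. -/
noncomputable def psMaxIdeal (k : Type*) [CommRing k] (n : ℕ) :
    Ideal (MvPowerSeries (Fin n) k) :=
  Ideal.span (Set.range (MvPowerSeries.X : Fin n → MvPowerSeries (Fin n) k))

/-!
Suppose `mult g ≥ 4`. Give `x₁` weight `2` and the other variables weight `1`: then every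
element of `(x₁² + g)` has weighted order `≥ 4`. In the arc `xⱼ(t) = ∑ᵢ X_{j,i} t^{i+1}` the
series `x₁(t)` becomes divisible by `t²` once `X_{1,1}` is set to `0`, so a monomial of weighted
degree `≥ 4` contributes only to `t⁴` and beyond. Hence `F₁⁰, F₂⁰, F₃⁰` all vanish on the
hyperplane `X_{1,1} = 0`, and `dim X₃⁰ ≥ 3(d+1) - 1 = 3d + 2`, contradicting topness.
-/

namespace MvPowerSeries

variable {σ R : Type*} [CommSemiring R]

def weightedOrderIdeal (w : σ → ℕ) (n : ℕ∞) : Ideal (MvPowerSeries σ R) where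
  carrier := {f | n ≤ f.weightedOrder w}
  add_mem' hf hg := le_trans (le_min hf hg) (min_weightedOrder_le_add w)
  zero_mem' := by simp
  smul_mem' c f hf := le_trans (le_add_left hf) (le_weightedOrder_mul w)

theorem mem_weightedOrderIdeal_iff {w : σ → ℕ} {n : ℕ∞} {f : MvPowerSeries σ R} :
    f ∈ weightedOrderIdeal w n ↔ n ≤ f.weightedOrder w :=
  Iff.rfl

theorem weightedOrderIdeal_mul_le (w : σ → ℕ) (m n : ℕ∞) :
    weightedOrderIdeal (R := R) w m * weightedOrderIdeal w n ≤ weightedOrderIdeal w (m + n) :=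
  Ideal.mul_le.mpr fun _ hf _ hg => le_trans (add_le_add hf hg) (le_weightedOrder_mul w)

theorem X_pow_mem_weightedOrderIdeal [Nontrivial R] (w : σ → ℕ) (j : σ) (e : ℕ) :
    X j ^ e ∈ weightedOrderIdeal (R := R) w (e * w j : ℕ) := by
  classical
  rw [mem_weightedOrderIdeal_iff, X_pow_eq, weightedOrder_monomial_of_ne_zero w one_ne_zero]
  simp [Finsupp.weight_single]

end MvPowerSeries

open MvPowerSeries in
theorem psMaxIdeal_pow_le_weightedOrderIdeal {k : Type*} [CommRing k] [Nontrivial k] {N : ℕ}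
    {w : Fin N → ℕ} (hw : ∀ j, 1 ≤ w j) (n : ℕ) :
    psMaxIdeal k N ^ n ≤ weightedOrderIdeal w n := by
  have hmax : psMaxIdeal k N ≤ weightedOrderIdeal w 1 := by
    refine Ideal.span_le.mpr (Set.range_subset_iff.mpr fun j => ?_)
    have := X_pow_mem_weightedOrderIdeal (R := k) w j 1
    rw [pow_one, one_mul] at this
    exact (mem_weightedOrderIdeal_iff.mp this).trans' (by exact_mod_cast hw j)
  induction n with
  | zero => exact fun f _ => by simp [mem_weightedOrderIdeal_iff]
  | succ n ih =>
    rw [pow_succ, Nat.cast_succ]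
    exact (Ideal.mul_mono ih hmax).trans (weightedOrderIdeal_mul_le w n 1)

open MvPowerSeries in
theorem four_le_weightedOrder_of_mem_span_X_sq_add {k : Type*} [CommRing k] [Nontrivial k] {N : ℕ}
    (j₀ : Fin N) {g f : MvPowerSeries (Fin N) k} (hg : g ∈ psMaxIdeal k N ^ 4)
    (hf : f ∈ Ideal.span {MvPowerSeries.X j₀ ^ 2 + g}) :
    4 ≤ f.weightedOrder (Function.update 1 j₀ 2) := by
  have hw : ∀ j, 1 ≤ Function.update (1 : Fin N → ℕ) j₀ 2 j := by
    intro j; rcases eq_or_ne j j₀ with rfl | h <;> simp [*]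
  have hX : MvPowerSeries.X j₀ ^ 2 ∈ weightedOrderIdeal (R := k) (Function.update 1 j₀ 2) 4 := by
    simpa using X_pow_mem_weightedOrderIdeal (R := k) (Function.update 1 j₀ 2) j₀ 2
  have hgen : MvPowerSeries.X j₀ ^ 2 + g ∈ weightedOrderIdeal (Function.update 1 j₀ 2) 4 :=
    add_mem hX (psMaxIdeal_pow_le_weightedOrderIdeal hw 4 hg)
  exact (Ideal.span_singleton_le_iff_mem _).mpr hgen hf

namespace MvPolynomial

theorem pow_dvd_aeval_of_le_weight {R A σ : Type*} [CommSemiring R] [CommSemiring A]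
    [Algebra R A] (w : σ → ℕ) {a : A} {s : σ → A} (hs : ∀ j, a ^ w j ∣ s j)
    {p : MvPolynomial σ R} {n : ℕ} (hp : ∀ e ∈ p.support, n ≤ Finsupp.weight w e) :
    a ^ n ∣ aeval s p := by
  rw [p.as_sum, map_sum]
  refine Finset.dvd_sum fun e he => ?_
  rw [aeval_monomial]
  refine Dvd.dvd.mul_left ((pow_dvd_pow a (hp e he)).trans ?_) _
  rw [Finsupp.weight_apply, Finsupp.sum, ← Finset.prod_pow_eq_pow_sum, Finsupp.prod]
  exact Finset.prod_dvd_prod_of_dvd _ _ fun j _ => by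
    rw [smul_eq_mul, pow_mul']
    exact pow_dvd_pow_of_dvd (hs j) _

theorem killCompl_X_eq_zero {R σ τ : Type*} [CommSemiring R] {f : σ → τ}
    (hf : Function.Injective f) {i : τ} (hi : i ∉ Set.range f) :
    killCompl (R := R) hf (X i) = 0 := by
  classical
  rw [killCompl, aeval_X, dif_neg hi]

end MvPolynomial

theorem natCard_le_ringKrullDim_quotient_of_le_ker_killCompl {R σ τ : Type*} [CommRing R]
    [Nontrivial R] [Finite τ] {f : τ → σ} (hf : Function.Injective f)
    {I : Ideal (MvPolynomial σ R)} (hI : I ≤ RingHom.ker (killCompl hf)) :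
    (Nat.card τ : WithBot ℕ∞) ≤ ringKrullDim (MvPolynomial σ R ⧸ I) := by
  have hsurj : Function.Surjective (Ideal.Quotient.lift I (killCompl hf).toRingHom hI) :=
    Ideal.Quotient.lift_surjective_of_surjective _ _
      (Function.LeftInverse.surjective (killCompl_rename_app hf))
  calc (Nat.card τ : WithBot ℕ∞)
      ≤ ringKrullDim R + Nat.card τ := le_add_of_nonneg_left ringKrullDim_nonneg_of_nontrivial
    _ ≤ ringKrullDim (MvPolynomial τ R) := ringKrullDim_add_natCard_le_ringKrullDim_mvPolynomial τ
    _ ≤ ringKrullDim (MvPolynomial σ R ⧸ I) := ringKrullDim_le_of_surjective _ hsurj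

noncomputable def jetArc (k : Type*) [CommRing k] (N m : ℕ) (j : Fin N) :
    Polynomial (MvPolynomial (Fin N × Fin m) k) :=
  ∑ i : Fin m, Polynomial.C (X (j, i)) * Polynomial.X ^ ((i : ℕ) + 1)

section Jets

variable {k : Type*} [CommRing k] {N m : ℕ}

theorem jetPoly_eq_coeff_aeval_jetArc (p : MvPolynomial (Fin N) k) (n : ℕ) :
    jetPoly k N m p n = (aeval (jetArc k N m) p).coeff n :=
  rfl

theorem X_pow_dvd_map_jetArc {B : Type*} [CommRing B] [Algebra k B] (j₀ : Fin N)
    {φ : MvPolynomial (Fin N × Fin (m + 1)) k →ₐ[k] B} (hφ : φ (X (j₀, 0)) = 0) (j : Fin N) :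
    Polynomial.X ^ Function.update (1 : Fin N → ℕ) j₀ 2 j ∣
      Polynomial.mapAlgHom φ (jetArc k N (m + 1) j) := by
  rw [jetArc, map_sum]
  refine Finset.dvd_sum fun i _ => ?_
  rw [map_mul, map_pow, Polynomial.coe_mapAlgHom, Polynomial.map_C, Polynomial.map_X]
  by_cases hi : Function.update (1 : Fin N → ℕ) j₀ 2 j ≤ (i : ℕ) + 1
  · exact Dvd.dvd.mul_left (pow_dvd_pow _ hi) _
  · have hj : j = j₀ := by
      by_contra hj
      simp [hj] at hi
    subst hj
    obtain rfl : i = 0 := by simpa using hi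
    rw [RingHom.coe_coe, hφ, Polynomial.C_0, zero_mul]
    exact dvd_zero _

theorem map_jetPoly_eq_zero {B : Type*} [CommRing B] [Algebra k B] (j₀ : Fin N)
    {φ : MvPolynomial (Fin N × Fin (m + 1)) k →ₐ[k] B} (hφ : φ (X (j₀, 0)) = 0)
    {p : MvPolynomial (Fin N) k} {n : ℕ}
    (hp : ∀ e ∈ p.support, n + 1 ≤ Finsupp.weight (Function.update 1 j₀ 2) e) :
    φ (jetPoly k N (m + 1) p n) = 0 := by
  have hdvd := pow_dvd_aeval_of_le_weight _ (X_pow_dvd_map_jetArc j₀ hφ) hp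
  rw [← comp_aeval_apply, Polynomial.coe_mapAlgHom] at hdvd
  rw [jetPoly_eq_coeff_aeval_jetArc, ← RingHom.coe_coe φ, ← Polynomial.coeff_map]
  exact Polynomial.X_pow_dvd_iff.mp hdvd n n.lt_succ_self

theorem map_psJet_eq_zero {B : Type*} [CommRing B] [Algebra k B] (j₀ : Fin N)
    {φ : MvPolynomial (Fin N × Fin (m + 1)) k →ₐ[k] B} (hφ : φ (X (j₀, 0)) = 0)
    {f : MvPowerSeries (Fin N) k} {n : ℕ}
    (hn : (n : ℕ∞) < f.weightedOrder (Function.update 1 j₀ 2)) :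
    φ (psJet k N (m + 1) f n) = 0 := by
  refine map_jetPoly_eq_zero j₀ hφ fun e he => ?_
  rw [mem_support_iff, MvPowerSeries.coeff_trunc] at he
  split_ifs at he
  · exact_mod_cast hn.trans_le (MvPowerSeries.weightedOrder_le _ he)
  · exact absurd rfl he

end Jets

theorem top_tau_one_implies_m2_eq_three_general
    (k : Type*) [Field k] (d : ℕ)
    (g : MvPowerSeries (Fin (d + 1)) k)
    -- `(X, 0)` is a top singularity, where `X` is defined by `x₁² + g = 0`:
    (htop : ∀ m : ℕ, 1 ≤ m →
      ringKrullDim (MvPolynomial (Fin (d + 1) × Fin m) k ⧸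
          psJetIdeal k (d + 1)
            (Ideal.span {(MvPowerSeries.X 0 ^ 2 + g : MvPowerSeries (Fin (d + 1)) k)}) m)
        = (m * d + 1 : ℕ)) :
    g ∉ psMaxIdeal k (d + 1) ^ 4 := by
  intro hg4
  have hinj := Subtype.val_injective (p := fun q : Fin (d + 1) × Fin 3 => q ≠ (0, 0))
  have hjet : psJetIdeal k (d + 1) (Ideal.span {MvPowerSeries.X 0 ^ 2 + g}) 3 ≤
      RingHom.ker (killCompl (R := k) hinj) := by
    refine Ideal.span_le.mpr ?_
    rintro _ ⟨f, hf, n, -, hn, rfl⟩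
    refine map_psJet_eq_zero 0 (killCompl_X_eq_zero hinj (by simp)) ?_
    refine lt_of_lt_of_le ?_ (four_le_weightedOrder_of_mem_span_X_sq_add 0 hg4 hf)
    exact_mod_cast Nat.lt_succ_of_le hn
  have hdim := natCard_le_ringKrullDim_quotient_of_le_ker_killCompl hinj hjet
  rw [htop 3 (by norm_num), Nat.card_eq_fintype_card, Fintype.card_subtype_compl,
    Fintype.card_prod, Fintype.card_fin, Fintype.card_subtype_eq] at hdim
  have : (d + 1) * 3 - 1 ≤ 3 * d + 1 := by exact_mod_cast hdim
  omega

theorem top_tau_one_implies_m2_eq_three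
    (k : Type*) [Field k] [IsAlgClosed k] [CharZero k] (d : ℕ) (hd : 1 ≤ d)
    (g : MvPowerSeries (Fin (d + 1)) k)
    -- `g` involves only the variables `x₂, …, x_{d+1}`:
    (hgvars : ∀ e : Fin (d + 1) →₀ ℕ, e 0 ≠ 0 → MvPowerSeries.coeff e g = 0)
    (hg0 : g ≠ 0)
    -- `mult g ≥ 3`:
    (hg3 : g ∈ psMaxIdeal k (d + 1) ^ 3)
    -- `(X, 0)` is a top singularity, where `X` is defined by `x₁² + g = 0`:
    (htop : ∀ m : ℕ, 1 ≤ m →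
      ringKrullDim (MvPolynomial (Fin (d + 1) × Fin m) k ⧸
          psJetIdeal k (d + 1)
            (Ideal.span {(MvPowerSeries.X 0 ^ 2 + g : MvPowerSeries (Fin (d + 1)) k)}) m)
        = (m * d + 1 : ℕ)) :
    g ∉ psMaxIdeal k (d + 1) ^ 4 :=
  top_tau_one_implies_m2_eq_three_general k d g htop
end

section
/- Let X be an arbitrary variety of dimension d, B an effective ℝ-Cartier divisor on X, and x a closed point at which X is singular. If m̂ld(x; X, 𝒥_X·B) ≥ d − 1, then B = 0 near x and m̂ld(x; X, 𝒥_X) = d − 1 exactly. -/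
theorem Int.cast_le_sub_one_of_cast_lt {R : Type*} [Ring R] [LinearOrder R]
    [IsStrictOrderedRing R] {x : R} {n : ℤ} (hx : ∃ z : ℤ, x = z) (h : x < n) : x ≤ n - 1 := by
  obtain ⟨z, rfl⟩ := hx
  exact_mod_cast Int.le_sub_one_of_lt (by exact_mod_cast h)

theorem singular_high_mather_mld_general (d : ℕ)
    (Smooth Bzero : Prop)
    -- `m̂ld(x;X,𝒥_X)` and `m̂ld(x;X,𝒥_X·B)`:
    (mldJ mldJB : ℝ)
    -- fact (1): `m̂ld(x;X,𝒥_X) ≤ d`, equality iff smooth: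
    (hle : mldJ ≤ (d : ℝ)) (hsmooth_iff : mldJ = (d : ℝ) ↔ Smooth)
    -- fact (2): `m̂ld(x;X,𝒥_X)` is an integer:
    (hint : ∃ z : ℤ, mldJ = (z : ℝ))
    -- fact (3): `B ≠ 0` near `x` forces a strict drop, `B = 0` gives equality:
    (hBlt : ¬ Bzero → mldJB < mldJ) (hBeq : Bzero → mldJB = mldJ)
    -- `(X, x)` is singular:
    (hsing : ¬ Smooth)
    -- hypothesis: `m̂ld(x;X,𝒥_X·B) ≥ d − 1`:
    (hmain : (d : ℝ) - 1 ≤ mldJB) :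
    Bzero ∧ mldJ = (d : ℝ) - 1 ∧ mldJB = (d : ℝ) - 1 := by
  have hlt : mldJ < d := hle.lt_of_ne (mt hsmooth_iff.mp hsing)
  have hJ : mldJ ≤ d - 1 := by exact_mod_cast Int.cast_le_sub_one_of_cast_lt hint (n := d) hlt
  have hB : Bzero := by
    by_contra hB
    exact (hBlt hB).not_ge (hJ.trans hmain)
  have hJB := hBeq hB
  exact ⟨hB, by linarith, by linarith⟩

theorem singular_high_mather_mld (d : ℕ)
    (ι : Type*) [Nonempty ι]
    (khat : ι → ℤ) (jord : ι → ℤ) (bord : ι → ℝ) (hbord : ∀ E, 0 ≤ bord E)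
    (Smooth Bzero : Prop)
    -- `m̂ld(x;X,𝒥_X)` and `m̂ld(x;X,𝒥_X·B)`:
    (mldJ mldJB : ℝ)
    (hmldJ : mldJ = sInf (Set.range fun E => (khat E : ℝ) - (jord E : ℝ) + 1))
    (hmldJB : mldJB = sInf (Set.range fun E => (khat E : ℝ) - (jord E : ℝ) - bord E + 1))
    -- fact (1): `m̂ld(x;X,𝒥_X) ≤ d`, equality iff smooth:
    (hle : mldJ ≤ (d : ℝ)) (hsmooth_iff : mldJ = (d : ℝ) ↔ Smooth)
    -- fact (2): `m̂ld(x;X,𝒥_X)` is an integer: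
    (hint : ∃ z : ℤ, mldJ = (z : ℝ))
    -- fact (3): `B ≠ 0` near `x` forces a strict drop, `B = 0` gives equality:
    (hBlt : ¬ Bzero → mldJB < mldJ) (hBeq : Bzero → mldJB = mldJ)
    -- `(X, x)` is singular:
    (hsing : ¬ Smooth)
    -- hypothesis: `m̂ld(x;X,𝒥_X·B) ≥ d − 1`:
    (hmain : (d : ℝ) - 1 ≤ mldJB) :
    Bzero ∧ mldJ = (d : ℝ) - 1 ∧ mldJB = (d : ℝ) - 1 :=
  singular_high_mather_mld_general d Smooth Bzero mldJ mldJB hle hsmooth_iff hint hBlt hBeq hsing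
    hmain
end
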